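/- Let (A, A₊, u_A) be an abstract state space and let F be a minus-face of Ω_A. Then there exists an effect g ∈ E_A with g ≠ u_A such that g(ω) = 1 for all ω ∈ F. -/

import Mathlib

open Set

/-- The dimension of a subset `S` of a real vector space: `d` where `d+1` is the maximal
number of affinely independent points in `S` (so `dim ∅ = -1`). -/
noncomputable def setDim {V : Type*} [AddCommGroup V] [Module ℝ V] (S : Set V) : ℤ :=
  ((sSup {n : ℕ | ∃ p : Fin n → V, (∀ i, p i ∈ S) ∧ AffineIndependent ℝ p} : ℕ) : ℤ) - 1

/-- A face of a convex set `C`: a nonempty convex subset `F ⊆ C` such that whenever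
`x, y ∈ C`, `0 < λ < 1` and `λ•x + (1-λ)•y ∈ F`, then `x, y ∈ F`. -/
def IsFaceOf {V : Type*} [AddCommGroup V] [Module ℝ V] (F C : Set V) : Prop :=
  F.Nonempty ∧ Convex ℝ F ∧ F ⊆ C ∧
    ∀ x ∈ C, ∀ y ∈ C, ∀ l : ℝ, 0 < l → l < 1 → l • x + (1 - l) • y ∈ F → x ∈ F ∧ y ∈ F

/-- A minus-face of a convex set `C` is a face of dimension `dim C - 1`. -/
def IsMinusFace {V : Type*} [AddCommGroup V] [Module ℝ V] (F C : Set V) : Prop :=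
  IsFaceOf F C ∧ setDim F = setDim C - 1

/-- A polytope: the convex hull of finitely many points. -/
def IsPolytope {V : Type*} [AddCommGroup V] [Module ℝ V] (S : Set V) : Prop :=
  ∃ t : Finset V, S = convexHull ℝ (t : Set V)

/-- A simplex: the convex hull of finitely many affinely independent points. -/
def IsSimplex {V : Type*} [AddCommGroup V] [Module ℝ V] (S : Set V) : Prop :=
  ∃ t : Finset V, AffineIndependent ℝ ((↑) : ↥(t : Set V) → V) ∧ S = convexHull ℝ (t : Set V)

/-- An abstract state space `(A, A₊, u)`: `A₊` is a closed generating cone in the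
finite-dimensional real vector space `A`, and `u` is a linear functional which is strictly
positive on `A₊ \ {0}`. -/
structure IsAbstractStateSpace {A : Type*} [NormedAddCommGroup A] [NormedSpace ℝ A]
    [FiniteDimensional ℝ A] (Apos : Set A) (u : A →ₗ[ℝ] ℝ) : Prop where
  closed : IsClosed Apos
  add_mem : ∀ x ∈ Apos, ∀ y ∈ Apos, x + y ∈ Apos
  smul_mem : ∀ (a : ℝ), 0 ≤ a → ∀ x ∈ Apos, a • x ∈ Apos
  pointed : ∀ x, x ∈ Apos → -x ∈ Apos → x = 0
  generating : ∀ x : A, ∃ y ∈ Apos, ∃ z ∈ Apos, x = y - z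
  unit_pos : ∀ x ∈ Apos, x ≠ 0 → 0 < u x

/-- The set of normalized states `Ω_A`. -/
def States {A : Type*} [NormedAddCommGroup A] [NormedSpace ℝ A]
    (Apos : Set A) (u : A →ₗ[ℝ] ℝ) : Set A :=
  {ω ∈ Apos | u ω = 1}

/-- The set of effects `E_A`: linear functionals taking values in `[0,1]` on all states. -/
def Effects {A : Type*} [NormedAddCommGroup A] [NormedSpace ℝ A]
    (Apos : Set A) (u : A →ₗ[ℝ] ℝ) : Set (Module.Dual ℝ A) :=
  {f | ∀ ω ∈ States Apos u, 0 ≤ f ω ∧ f ω ≤ 1}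

/-- A pure effect is an extreme point of the convex set of effects. -/
def IsPureEffect {A : Type*} [NormedAddCommGroup A] [NormedSpace ℝ A]
    (Apos : Set A) (u : A →ₗ[ℝ] ℝ) (f : Module.Dual ℝ A) : Prop :=
  f ∈ Set.extremePoints ℝ (Effects Apos u)

/-- The certain face `F_f = {ω ∈ Ω_A | f(ω) = 1}` of an effect `f`. -/
def certainFace {A : Type*} [NormedAddCommGroup A] [NormedSpace ℝ A]
    (Apos : Set A) (u : A →ₗ[ℝ] ℝ) (f : Module.Dual ℝ A) : Set A :=
  {ω ∈ States Apos u | f ω = 1}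

/-- The impossible face `F̄_f = {ω ∈ Ω_A | f(ω) = 0}` of an effect `f`. -/
def impossibleFace {A : Type*} [NormedAddCommGroup A] [NormedSpace ℝ A]
    (Apos : Set A) (u : A →ₗ[ℝ] ℝ) (f : Module.Dual ℝ A) : Set A :=
  {ω ∈ States Apos u | f ω = 0}

/-- A transformation: a positive linear map such that `u(T ω) ≤ 1` for all states `ω`. -/
def IsTransformation {A : Type*} [NormedAddCommGroup A] [NormedSpace ℝ A]
    (Apos : Set A) (u : A →ₗ[ℝ] ℝ) (T : A →ₗ[ℝ] A) : Prop :=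
  (∀ x ∈ Apos, T x ∈ Apos) ∧ ∀ ω ∈ States Apos u, u (T ω) ≤ 1

variable {A : Type*} [NormedAddCommGroup A] [NormedSpace ℝ A] [FiniteDimensional ℝ A]

lemma setDim_eq_finrank {V : Type*} [NormedAddCommGroup V] [NormedSpace ℝ V]
    [FiniteDimensional ℝ V] {S : Set V} (hS : S.Nonempty) :
    setDim S = (Module.finrank ℝ (vectorSpan ℝ S) : ℤ) := by
  set d := Module.finrank ℝ (vectorSpan ℝ S) with hd
  set N := {n : ℕ | ∃ p : Fin n → V, (∀ i, p i ∈ S) ∧ AffineIndependent ℝ p} with hN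
  have hub : ∀ n ∈ N, n ≤ d + 1 := by
    rintro n ⟨p, hpS, hpi⟩
    rcases n with _ | m
    · omega
    · have hc : Fintype.card (Fin (m + 1)) = m + 1 := by simp
      have h1 : Module.finrank ℝ (vectorSpan ℝ (Set.range p)) = m :=
        hpi.finrank_vectorSpan hc
      have h2 : vectorSpan ℝ (Set.range p) ≤ vectorSpan ℝ S :=
        vectorSpan_mono ℝ (by rintro _ ⟨i, rfl⟩; exact hpS i)
      have := Submodule.finrank_mono h2
      omega
  have hmem : d + 1 ∈ N := by
    obtain ⟨t, hts, hspan, hind⟩ := exists_affineIndependent ℝ V S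
    have htf : t.Finite := finite_set_of_fin_dim_affineIndependent ℝ hind
    haveI := htf.fintype
    have htne : t.Nonempty := by
      rcases hS with ⟨x, hx⟩
      rcases t.eq_empty_or_nonempty with rfl | h
      · exfalso
        have : x ∈ affineSpan ℝ S := subset_affineSpan ℝ S hx
        rw [← hspan] at this
        exact AffineSubspace.notMem_bot ℝ V x (by simpa using this)
      · exact h
    haveI : Nonempty t := htne.coe_sort
    have hcard : Fintype.card t = d + 1 := by
      have h1 : vectorSpan ℝ t = vectorSpan ℝ S := by
        rw [← direction_affineSpan, ← direction_affineSpan, hspan]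
      have hc : Fintype.card t = (Fintype.card t - 1) + 1 :=
        (Nat.succ_pred_eq_of_pos Fintype.card_pos).symm
      have h2 : Module.finrank ℝ (vectorSpan ℝ (Set.range ((↑) : t → V)))
          = Fintype.card t - 1 := hind.finrank_vectorSpan hc
      rw [Subtype.range_coe] at h2
      rw [h1] at h2
      omega
    obtain ⟨e⟩ : Nonempty (Fin (d + 1) ≃ t) :=
      ⟨(Fintype.equivFinOfCardEq hcard).symm⟩
    refine ⟨fun i => (e i : V), fun i => hts (e i).2, ?_⟩
    exact hind.comp_embedding e.toEmbedding
  have hbdd : BddAbove N := ⟨d + 1, hub⟩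
  have h1 : sSup N = d + 1 := le_antisymm (csSup_le ⟨d + 1, hmem⟩ hub) (le_csSup hbdd hmem)
  simp only [setDim, hN.symm, h1]
  push_cast
  ring

lemma states_isCompact {A : Type*} [NormedAddCommGroup A] [NormedSpace ℝ A]
    [FiniteDimensional ℝ A] {Apos : Set A} {u : A →ₗ[ℝ] ℝ}
    (hASS : IsAbstractStateSpace Apos u) : IsCompact (States Apos u) := by
  have hu : Continuous u := u.continuous_of_finiteDimensional
  have hclosed : IsClosed (States Apos u) := by
    have : States Apos u = Apos ∩ u ⁻¹' {1} := rfl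
    rw [this]
    exact hASS.closed.inter (isClosed_singleton.preimage hu)
  have hbdd : ∃ R : ℝ, ∀ ω ∈ States Apos u, ‖ω‖ ≤ R := by
    set K := Apos ∩ Metric.sphere (0 : A) 1 with hK
    rcases K.eq_empty_or_nonempty with hKe | hKne
    · refine ⟨1, fun ω hω => ?_⟩
      by_contra h
      push_neg at h
      have hω0 : ω ≠ 0 := by
        intro h0; rw [h0] at h; simp at h; linarith
      have : (1 / ‖ω‖) • ω ∈ K := by
        constructor
        · exact hASS.smul_mem _ (by positivity) _ hω.1
        · simp [norm_smul, abs_of_nonneg, norm_pos_iff.mpr hω0,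
            div_mul_cancel₀, (norm_pos_iff.mpr hω0).ne']
      rw [hKe] at this; exact this
    · have hKcomp : IsCompact K :=
        (isCompact_sphere 0 1).inter_left hASS.closed
      obtain ⟨x₀, hx₀, hmin⟩ := hKcomp.exists_isMinOn hKne hu.continuousOn
      have hx₀pos : 0 < u x₀ := by
        apply hASS.unit_pos _ hx₀.1
        intro h0
        have := hx₀.2
        rw [h0] at this; simp at this
      refine ⟨1 / u x₀, fun ω hω => ?_⟩
      rcases eq_or_ne ω 0 with rfl | hω0
      · simp; positivity
      · have hm : (1 / ‖ω‖) • ω ∈ K := by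
          constructor
          · exact hASS.smul_mem _ (by positivity) _ hω.1
          · simp [norm_smul, abs_of_nonneg, norm_pos_iff.mpr hω0,
              div_mul_cancel₀, (norm_pos_iff.mpr hω0).ne']
        have h2 : u x₀ ≤ (1 / ‖ω‖) * u ω := by
          simpa using hmin hm
        rw [hω.2, mul_one] at h2
        have hn : 0 < ‖ω‖ := norm_pos_iff.mpr hω0
        rw [le_div_iff₀ hx₀pos]
        calc ‖ω‖ * u x₀ ≤ ‖ω‖ * (1 / ‖ω‖) := by
              exact mul_le_mul_of_nonneg_left h2 hn.le
          _ = 1 := by field_simp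
  obtain ⟨R, hR⟩ := hbdd
  apply Metric.isCompact_of_isClosed_isBounded hclosed
  rw [Metric.isBounded_iff_subset_closedBall 0]
  exact ⟨R, fun ω hω => by simpa [Metric.mem_closedBall] using hR ω hω⟩

lemma exists_dual_eq_one_of_not_mem {A : Type*} [NormedAddCommGroup A] [NormedSpace ℝ A]
    [FiniteDimensional ℝ A] {W : Submodule ℝ A} {v : A} (hv : v ∉ W) :
    ∃ φ : Module.Dual ℝ A, φ v = 1 ∧ ∀ w ∈ W, φ w = 0 := by
  have hne : W.mkQ v ≠ 0 := by
    rw [Ne, Submodule.mkQ_apply, Submodule.Quotient.mk_eq_zero]; exact hv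
  have : ¬ ∀ ψ : Module.Dual ℝ (A ⧸ W), ψ (W.mkQ v) = 0 := by
    rw [Module.forall_dual_apply_eq_zero_iff]; exact hne
  push_neg at this
  obtain ⟨ψ, hψ⟩ := this
  refine ⟨(ψ (W.mkQ v))⁻¹ • (ψ.comp W.mkQ), ?_, fun w hw => ?_⟩
  · simp only [LinearMap.smul_apply, LinearMap.comp_apply, Submodule.mkQ_apply, smul_eq_mul]
    exact inv_mul_cancel₀ (by simpa using hψ)
  · simp [(Submodule.Quotient.mk_eq_zero W).mpr hw, Submodule.mkQ_apply]

lemma exists_pos_mem_of_intrinsicInterior {A : Type*} [NormedAddCommGroup A]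
    [NormedSpace ℝ A] [FiniteDimensional ℝ A] {F : Set A} {z q : A}
    (hz : z ∈ intrinsicInterior ℝ F) (hq : q ∈ affineSpan ℝ F) :
    ∃ t : ℝ, 0 < t ∧ z + t • (z - q) ∈ F := by
  obtain ⟨z', hz'int, hz'eq⟩ := hz
  have hzS : z ∈ affineSpan ℝ F := hz'eq ▸ z'.2
  have hdir : z - q ∈ (affineSpan ℝ F).direction := by
    simpa using AffineSubspace.vsub_mem_direction hzS hq
  have hmem : ∀ t : ℝ, z + t • (z - q) ∈ affineSpan ℝ F := fun t => by
    have := AffineSubspace.vadd_mem_of_mem_direction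
      ((affineSpan ℝ F).direction.smul_mem t hdir) hzS
    simpa [add_comm] using this
  have hγc : Continuous (fun t : ℝ => (⟨z + t • (z - q), hmem t⟩ : affineSpan ℝ F)) :=
    Continuous.subtype_mk (continuous_const.add (continuous_id.smul continuous_const)) _
  have hnhds : (fun t : ℝ => (⟨z + t • (z - q), hmem t⟩ : affineSpan ℝ F)) ⁻¹'
      interior (((↑) : affineSpan ℝ F → A) ⁻¹' F) ∈ nhds (0 : ℝ) := by
    apply (isOpen_interior.preimage hγc).mem_nhds
    have h0 : (⟨z + (0 : ℝ) • (z - q), hmem 0⟩ : affineSpan ℝ F) = z' :=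
      Subtype.ext (by simp [hz'eq])
    simp only [Set.mem_preimage, h0]
    exact hz'int
  obtain ⟨ε, hε, hball⟩ := Metric.mem_nhds_iff.mp hnhds
  refine ⟨ε / 2, by positivity, ?_⟩
  have h2 : (⟨z + (ε / 2) • (z - q), hmem _⟩ : affineSpan ℝ F) ∈
      interior (((↑) : affineSpan ℝ F → A) ⁻¹' F) := by
    apply hball
    simp only [Metric.mem_ball, Real.dist_eq, sub_zero]
    rw [abs_of_pos (half_pos hε)]
    linarith
  have h3 : (⟨z + (ε / 2) • (z - q), hmem _⟩ : affineSpan ℝ F) ∈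
      ((↑) : affineSpan ℝ F → A) ⁻¹' F := interior_subset h2
  exact h3

/-- For a minus-face `F` of `Ω_A` there is an effect `g ≠ u_A` with
`g(ω) = 1` for all `ω ∈ F`. -/
theorem exists_effect_ne_unit_certain_on_minusFace
    (Apos : Set A) (u : A →ₗ[ℝ] ℝ) (hASS : IsAbstractStateSpace Apos u)
    (F : Set A) (hF : IsMinusFace F (States Apos u)) :
    ∃ g ∈ Effects Apos u, g ≠ u ∧ ∀ ω ∈ F, g ω = 1 := by
  obtain ⟨⟨hFne, hFconv, hFsub, hface⟩, hdim⟩ := hF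
  set Ω := States Apos u with hΩdef
  have hΩne : Ω.Nonempty := hFne.mono hFsub
  have hu1 : ∀ ω ∈ Ω, u ω = 1 := fun ω h => h.2
  have hΩconv : Convex ℝ Ω := by
    intro x hx y hy a b ha hb hab
    refine ⟨hASS.add_mem _ (hASS.smul_mem a ha x hx.1) _ (hASS.smul_mem b hb y hy.1), ?_⟩
    have : u (a • x + b • y) = a * u x + b * u y := by simp
    rw [this, hx.2, hy.2]; linarith
  obtain ⟨z₀, hz₀⟩ := hFne
  have hFne : F.Nonempty := ⟨z₀, hz₀⟩
  have hdimF := setDim_eq_finrank hFne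
  have hdimΩ := setDim_eq_finrank hΩne
  rw [hdimF, hdimΩ] at hdim
  set W := vectorSpan ℝ F with hWdef
  set V₀ := vectorSpan ℝ Ω with hV₀def
  have hWV : W ≤ V₀ := vectorSpan_mono ℝ hFsub
  have hex : ∃ ω₁ ∈ Ω, ω₁ ∉ affineSpan ℝ F := by
    by_contra h
    push_neg at h
    have h1 : affineSpan ℝ Ω ≤ affineSpan ℝ F := affineSpan_le.mpr h
    have h2 : V₀ ≤ W := by
      rw [hWdef, hV₀def, ← direction_affineSpan, ← direction_affineSpan]
      exact AffineSubspace.direction_le h1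
    have := Submodule.finrank_mono h2
    omega
  obtain ⟨ω₁, hω₁Ω, hω₁⟩ := hex
  have hz₀span : z₀ ∈ affineSpan ℝ F := subset_affineSpan ℝ F hz₀
  have hvW : ω₁ - z₀ ∉ W := by
    intro hmem
    apply hω₁
    have : (ω₁ - z₀) +ᵥ z₀ ∈ affineSpan ℝ F :=
      AffineSubspace.vadd_mem_of_mem_direction
        (by rw [direction_affineSpan]; exact hmem) hz₀span
    simpa using this
  obtain ⟨φ, hφv, hφW⟩ := exists_dual_eq_one_of_not_mem hvW
  have hvV₀ : ω₁ - z₀ ∈ V₀ := by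
    simpa using vsub_mem_vectorSpan ℝ hω₁Ω (hFsub hz₀)
  have hWker : W = LinearMap.ker φ ⊓ V₀ := by
    have hle : W ≤ LinearMap.ker φ ⊓ V₀ :=
      le_inf (fun w hw => LinearMap.mem_ker.mpr (hφW w hw)) hWV
    have hlt : LinearMap.ker φ ⊓ V₀ < V₀ := by
      refine lt_of_le_of_ne inf_le_right (fun h => ?_)
      have h4 : ω₁ - z₀ ∈ LinearMap.ker φ ⊓ V₀ := by rw [h]; exact hvV₀
      have := LinearMap.mem_ker.mp h4.1
      rw [hφv] at this; exact one_ne_zero this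
    have h3 := Submodule.finrank_lt_finrank_of_lt hlt
    exact Submodule.eq_of_le_of_finrank_le hle (by omega)
  set ψ : A →ₗ[ℝ] ℝ := φ - φ z₀ • u with hψdef
  have hψeval : ∀ ω ∈ Ω, ψ ω = φ (ω - z₀) := by
    intro ω hω
    simp [hψdef, hu1 ω hω, map_sub]
  have hψF : ∀ ω ∈ F, ψ ω = 0 := by
    intro ω hω
    rw [hψeval ω (hFsub hω)]
    exact hφW _ (by simpa using vsub_mem_vectorSpan ℝ hω hz₀)
  have hψω₁ : ψ ω₁ = 1 := by rw [hψeval ω₁ hω₁Ω]; exact hφv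
  -- one-sidedness
  have hside : ∀ y ∈ Ω, 0 ≤ ψ y := by
    intro y hy
    by_contra hneg
    push_neg at hneg
    set b := ψ y with hb
    set l : ℝ := -b / (1 - b) with hl
    have hb0 : b < 0 := hneg
    have h1b : (0 : ℝ) < 1 - b := by linarith
    have hl0 : 0 < l := div_pos (by linarith) h1b
    have hl1 : l < 1 := by
      rw [hl, div_lt_one h1b]; linarith
    set q := l • ω₁ + (1 - l) • y with hq
    have hqΩ : q ∈ Ω := hΩconv hω₁Ω hy hl0.le (by linarith) (by ring)
    have hψq : ψ q = 0 := by
      have : ψ q = l * ψ ω₁ + (1 - l) * ψ y := by simp [hq]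
      rw [this, hψω₁, ← hb, hl]
      field_simp
      ring
    have hqspan : q ∈ affineSpan ℝ F := by
      have hqW : q - z₀ ∈ W := by
        rw [hWker, Submodule.mem_inf]
        refine ⟨LinearMap.mem_ker.mpr ?_, by simpa using vsub_mem_vectorSpan ℝ hqΩ (hFsub hz₀)⟩
        rw [← hψeval q hqΩ]; exact hψq
      have : (q - z₀) +ᵥ z₀ ∈ affineSpan ℝ F :=
        AffineSubspace.vadd_mem_of_mem_direction
          (by rw [direction_affineSpan]; exact hqW) hz₀span
      simpa using this
    obtain ⟨z, hzint⟩ := hFne.intrinsicInterior hFconv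
    have hzF : z ∈ F := intrinsicInterior_subset hzint
    obtain ⟨t, ht, hz'F⟩ := exists_pos_mem_of_intrinsicInterior hzint hqspan
    have h1t : (0 : ℝ) < 1 + t := by linarith
    have hcomb : (1 / (1 + t)) • (z + t • (z - q)) + (1 - 1 / (1 + t)) • q = z := by
      match_scalars <;> (field_simp; try ring)
    have hqF : q ∈ F := by
      have := hface (z + t • (z - q)) (hFsub hz'F) q hqΩ (1 / (1 + t))
        (by positivity) (by rw [div_lt_one h1t]; linarith) (by rw [hcomb]; exact hzF)
      exact this.2
    have hω₁F : ω₁ ∈ F := (hface ω₁ hω₁Ω y hy l hl0 hl1 (hq ▸ hqF)).1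
    have := hψF ω₁ hω₁F
    rw [hψω₁] at this
    exact one_ne_zero this
  -- compactness: maximum of ψ on Ω
  obtain ⟨x₀, hx₀Ω, hmax⟩ := (states_isCompact hASS).exists_isMaxOn hΩne
    (ψ.continuous_of_finiteDimensional.continuousOn)
  set M := ψ x₀ with hM
  have hM1 : 1 ≤ M := by
    have h5 : ψ ω₁ ≤ ψ x₀ := hmax hω₁Ω
    rwa [hψω₁] at h5
  have hM0 : 0 < M + 1 := by linarith
  set c : ℝ := 1 / (M + 1) with hc
  have hc0 : 0 < c := by positivity
  refine ⟨u - c • ψ, ?_, ?_, ?_⟩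
  · intro ω hω
    have hev : (u - c • ψ) ω = 1 - c * ψ ω := by
      simp [hu1 ω hω]
    have hψle : ψ ω ≤ M := hmax hω
    have hψge : 0 ≤ ψ ω := hside ω hω
    constructor
    · rw [hev]
      have h1 : c * ψ ω ≤ c * M := mul_le_mul_of_nonneg_left hψle hc0.le
      have h2 : c * M < 1 := by
        rw [hc, one_div, inv_mul_eq_div, div_lt_one hM0]; linarith
      linarith
    · rw [hev]
      nlinarith
  · intro h
    have : (u - c • ψ) ω₁ = u ω₁ := by rw [h]
    rw [LinearMap.sub_apply, LinearMap.smul_apply, hψω₁, smul_eq_mul, mul_one] at this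
    linarith
  · intro ω hω
    have : (u - c • ψ) ω = u ω - c * ψ ω := by simp
    rw [this, hψF ω hω, hu1 ω (hFsub hω)]
    ring
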